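/- arXiv:1005.4317 — 6 statements merged into one kernel-verified Lean document; each statement's English description precedes it below -/
import Mathlib

section
/- Let μ > 0 and −1 ≤ α ≤ 1. Suppose f ∈ 𝒮_p(α) has the representation (z/f(z))^μ = 1 + Σ_{n=1}^∞ b_n z^n with b_n ≥ 0 for all n ≥ 1. Then Σ_{n=1}^∞ (2n − μ(1−α)) b_n ≤ μ(1−α). -/
open Complex Metric Set

noncomputable section

/-- The open unit disk in ℂ. -/
def unitDisk : Set ℂ := Metric.ball 0 1

/-- `f ∈ 𝒜`: analytic on the unit disk, `f 0 = 0`, `f' 0 = 1`. -/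
def InA (f : ℂ → ℂ) : Prop :=
  AnalyticOnNhd ℂ f unitDisk ∧ f 0 = 0 ∧ deriv f 0 = 1

/-- `f ∈ 𝒮`: normalized analytic and univalent on the unit disk. -/
def InS (f : ℂ → ℂ) : Prop := InA f ∧ Set.InjOn f unitDisk

/-- `z f'(z)/f(z)`, understood as `1` at `z = 0`. -/
def zRatio (f : ℂ → ℂ) (z : ℂ) : ℂ := if z = 0 then 1 else z * deriv f z / f z

/-- `f ∈ 𝒮_p(α)`. -/
def InSp (f : ℂ → ℂ) (α : ℝ) : Prop :=
  InS f ∧ ∀ z ∈ unitDisk, ‖zRatio f z - 1‖ ≤ (zRatio f z).re - α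

/-- The principal power `(z/f(z))^μ`, taken equal to `1` at `z = 0`. -/
def pw (f : ℂ → ℂ) (μ : ℝ) (z : ℂ) : ℂ :=
  if z = 0 then 1 else (z / f z) ^ (μ : ℂ)

/-- `f ∈ 𝒰(λ, μ)`. -/
def InU (f : ℂ → ℂ) (lam μ : ℝ) : Prop :=
  InA f ∧ (∀ z ∈ unitDisk, z ≠ 0 → f z ≠ 0) ∧
  ∀ z ∈ unitDisk,
    ‖deriv f z * (if z = 0 then 1 else (z / f z) ^ ((μ : ℂ) + 1)) - 1‖ ≤ lam

/-- `f ∈ 𝒮*(α)`: starlike of order `α`. -/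
def InSstar (f : ℂ → ℂ) (α : ℝ) : Prop :=
  InS f ∧ ∀ z ∈ unitDisk, α < (zRatio f z).re

/-! Write `G = (z/f)^μ`. Since `G = (f(z)/z)^(-μ)`, logarithmic differentiation gives
`μ G (z f'/f - 1) = -z G'`, first near `0` and then on the whole disk by the identity theorem.
At a radius `0 < r < 1` the nonnegativity of the `b_n` makes `G(r) = 1 + S` and `r G'(r) = T` real
and nonnegative, where `S = Σ b_n r^n` and `T = Σ n b_n r^n`. Hence `z f'/f - 1` is a nonpositive
real at `r`, and the `𝒮_p(α)` condition there reads `2T ≤ μ(1-α)(1+S)`, i.e.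
`Σ (2n - μ(1-α)) b_n r^n ≤ μ(1-α)`. Only finitely many terms of this series are negative, so
letting `r → 1` bounds its partial sums, and the bound passes to the sum. -/

open Filter Topology

theorem hasFPowerSeriesOnBall_ofScalars_of_hasSum {a : ℕ → ℂ} {F : ℂ → ℂ} {R : NNReal}
    (hR : 0 < R) (h : ∀ z ∈ ball (0 : ℂ) R, HasSum (fun n ↦ a n * z ^ n) (F z)) :
    HasFPowerSeriesOnBall F (FormalMultilinearSeries.ofScalars ℂ a) 0 R := by
  refine ⟨ENNReal.le_of_forall_nnreal_lt fun r hr ↦ ?_, by exact_mod_cast hR, fun {y} hy ↦ ?_⟩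
  · have hr : ((r : ℝ) : ℂ) ∈ ball (0 : ℂ) R := by simpa using hr
    refine FormalMultilinearSeries.le_radius_of_tendsto _ (l := 0) ?_
    simpa [FormalMultilinearSeries.ofScalars_norm] using (h _ hr).summable.tendsto_atTop_zero.norm
  · rw [Metric.eball_coe] at hy
    simpa [FormalMultilinearSeries.ofScalars_apply_eq, mul_comm] using h y hy

theorem HasFPowerSeriesOnBall.hasSum_deriv {𝕜 E : Type*} [NontriviallyNormedField 𝕜]
    [NormedAddCommGroup E] [NormedSpace 𝕜 E] [CompleteSpace E] {f : 𝕜 → E}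
    {p : FormalMultilinearSeries 𝕜 𝕜 E} {x y : 𝕜} {r : ENNReal}
    (hf : HasFPowerSeriesOnBall f p x r) (hy : y ∈ Metric.eball 0 r) :
    HasSum (fun n ↦ y ^ n • ((n + 1) • p.coeff (n + 1))) (deriv f (x + y)) := by
  have := (hf.fderiv.hasSum hy).mapL (ContinuousLinearMap.apply 𝕜 E 1)
  simpa [FormalMultilinearSeries.apply_eq_pow_smul_coeff] using this

theorem exists_hasSum_eq_ofReal {x : ℕ → ℝ} {w : ℂ} (h : HasSum (fun n ↦ (x n : ℂ)) w) :
    ∃ s : ℝ, HasSum x s ∧ w = s :=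
  ⟨_, (Complex.summable_ofReal.1 h.summable).hasSum, by rw [Complex.ofReal_tsum, h.tsum_eq]⟩

theorem summable_and_tsum_le_of_sum_range_le {t : ℕ → ℝ} {c : ℝ} {N : ℕ}
    (ht : ∀ n, N ≤ n → 0 ≤ t n) (h : ∀ M, N ≤ M → ∑ n ∈ Finset.range M, t n ≤ c) :
    Summable t ∧ ∑' n, t n ≤ c := by
  have hsum : Summable t := by
    rw [← summable_nat_add_iff N]
    refine summable_of_sum_range_le (c := c - ∑ n ∈ Finset.range N, t n)
      (fun n ↦ ht _ (Nat.le_add_left _ _)) fun M ↦ ?_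
    have := h (N + M) (Nat.le_add_right _ _)
    rw [Finset.sum_range_add] at this
    simp_rw [add_comm _ N]
    linarith
  refine ⟨hsum, le_of_tendsto hsum.hasSum.tendsto_sum_nat ?_⟩
  filter_upwards [eventually_ge_atTop N] using h

theorem sum_range_le_of_hasSum_pow_succ_le {t : ℕ → ℝ} {c : ℝ} {N M : ℕ}
    (ht : ∀ n, N ≤ n → 0 ≤ t n) (hM : N ≤ M)
    (h : ∀ r ∈ Ioo (0 : ℝ) 1, ∃ s ≤ c, HasSum (fun n ↦ t n * r ^ (n + 1)) s) :
    ∑ n ∈ Finset.range M, t n ≤ c := by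
  have hlim : Tendsto (fun r : ℝ ↦ ∑ n ∈ Finset.range M, t n * r ^ (n + 1)) (𝓝[<] 1)
      (𝓝 (∑ n ∈ Finset.range M, t n)) := by
    have : Continuous fun r : ℝ ↦ ∑ n ∈ Finset.range M, t n * r ^ (n + 1) := by fun_prop
    simpa using (this.tendsto 1).mono_left nhdsWithin_le_nhds
  refine le_of_tendsto hlim ?_
  filter_upwards [Ioo_mem_nhdsLT zero_lt_one] with r hr
  obtain ⟨s, hsc, hs⟩ := h r hr
  refine (sum_le_hasSum _ (fun n hn ↦ ?_) hs).trans hsc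
  exact mul_nonneg (ht n (hM.trans (by simpa using hn))) (pow_nonneg hr.1.le _)

theorem two_mul_le_of_norm_sub_one_le {ζ : ℂ} {k T α : ℝ} (hk : 0 < k) (hT : 0 ≤ T)
    (hζ : (k : ℂ) * (ζ - 1) = -T) (h : ‖ζ - 1‖ ≤ ζ.re - α) : 2 * T ≤ k * (1 - α) := by
  have hk' : (k : ℂ) ≠ 0 := by exact_mod_cast hk.ne'
  have hζ' : ζ - 1 = ((-(T / k) : ℝ) : ℂ) := by
    push_cast
    field_simp
    linear_combination hζ
  rw [show ζ.re = (ζ - 1).re + 1 by simp, hζ', Complex.ofReal_re, Complex.norm_real,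
    Real.norm_eq_abs, abs_neg, abs_of_nonneg (by positivity)] at h
  have : 2 * T / k ≤ 1 - α := by rw [mul_div_assoc]; linarith
  rw [div_le_iff₀ hk] at this
  linarith

theorem deriv_mul_eq_of_eqOn_inv_cpow {u G : ℂ → ℂ} {U : Set ℂ} {z₀ μ : ℂ} (hU : IsOpen U)
    (hUc : IsPreconnected U) (hz₀ : z₀ ∈ U) (hu : AnalyticOnNhd ℂ u U)
    (hG : AnalyticOnNhd ℂ G U) (hu₀ : (u z₀)⁻¹ ∈ slitPlane)
    (hGu : EqOn G (fun z ↦ (u z)⁻¹ ^ μ) U) :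
    EqOn (fun z ↦ deriv G z * u z) (fun z ↦ -μ * deriv u z * G z) U := by
  refine (hG.deriv.mul hu).eqOn_of_preconnected_of_eventuallyEq
    ((analyticOnNhd_const.mul hu.deriv).mul hG) hUc hz₀ ?_
  have hu₀' : u z₀ ≠ 0 := by simpa using slitPlane_ne_zero hu₀
  have hslit : ∀ᶠ z in 𝓝 z₀, (u z)⁻¹ ∈ slitPlane :=
    ((hu z₀ hz₀).continuousAt.inv₀ hu₀').eventually (isOpen_slitPlane.mem_nhds hu₀)
  filter_upwards [hslit, hU.mem_nhds hz₀] with z hz hzU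
  have huz : u z ≠ 0 := by simpa using slitPlane_ne_zero hz
  have hderiv : deriv G z = μ * (u z)⁻¹ ^ (μ - 1) * (-deriv u z / u z ^ 2) := by
    rw [(hGu.eventuallyEq_of_mem (hU.mem_nhds hzU)).deriv_eq]
    exact (((hu z hzU).differentiableAt.hasDerivAt.inv huz).cpow_const hz).deriv
  rw [hderiv, hGu hzU, Complex.cpow_sub _ _ (inv_ne_zero huz), Complex.cpow_one]
  field_simp

theorem eq_mul_dslope {f : ℂ → ℂ} (hf0 : f 0 = 0) (z : ℂ) : f z = z * dslope f 0 z := by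
  simpa [hf0] using (sub_smul_dslope f 0 z).symm

theorem InS.apply_ne_zero {f : ℂ → ℂ} (hf : InS f) {z : ℂ} (hz : z ∈ unitDisk) (hz0 : z ≠ 0) :
    f z ≠ 0 := fun h ↦ hz0 (hf.2 hz (mem_ball_self one_pos) (by rw [h, hf.1.2.1]))

theorem InA.pw_mul_zRatio_sub_one {f : ℂ → ℂ} {μ : ℝ} (hf : InA f)
    (hf0 : ∀ z ∈ unitDisk, z ≠ 0 → f z ≠ 0) (hG : AnalyticOnNhd ℂ (pw f μ) unitDisk)
    {z : ℂ} (hz : z ∈ unitDisk) :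
    μ * pw f μ z * (zRatio f z - 1) = -(z * deriv (pw f μ) z) := by
  obtain ⟨hfa, hf00, hf'0⟩ := hf
  set u := dslope f 0
  have h0 : (0 : ℂ) ∈ unitDisk := mem_ball_self one_pos
  have hfu : ∀ z, f z = z * u z := eq_mul_dslope hf00
  have hu0 : u 0 = 1 := by simp [u, hf'0]
  have hua : AnalyticOnNhd ℂ u unitDisk :=
    ((differentiableOn_dslope (isOpen_ball.mem_nhds h0)).2 hfa.differentiableOn).analyticOnNhd
      isOpen_ball
  have hGu : EqOn (pw f μ) (fun z ↦ (u z)⁻¹ ^ (μ : ℂ)) unitDisk := by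
    intro w hw
    rcases eq_or_ne w 0 with rfl | hw0
    · simp [pw, hu0]
    · have huw : u w ≠ 0 := fun h ↦ hf0 w hw hw0 (by simp [hfu, h])
      simp only [pw, if_neg hw0, hfu]
      field_simp
  have hderiv := deriv_mul_eq_of_eqOn_inv_cpow isOpen_ball (convex_ball _ _).isPreconnected h0
    hua hG (by simp [hu0]) hGu hz
  rcases eq_or_ne z 0 with rfl | hz0
  · simp [zRatio]
  · have huz : u z ≠ 0 := fun h ↦ hf0 z hz hz0 (by simp [hfu, h])
    have hf'z : deriv f z = u z + z * deriv u z := by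
      rw [funext hfu, deriv_fun_mul differentiableAt_fun_id (hua z hz).differentiableAt]
      simp
    simp only at hderiv
    rw [zRatio, if_neg hz0, hf'z, hfu]
    field_simp
    linear_combination z * hderiv

theorem InSp.exists_hasSum_pow_succ_le {μ α : ℝ} (hμ : 0 < μ) {f : ℂ → ℂ} {b : ℕ → ℝ}
    (hb : ∀ n, 1 ≤ n → 0 ≤ b n) (hf : InSp f α)
    (hrepr : ∀ z ∈ unitDisk,
      HasSum (fun n : ℕ => (b (n + 1) : ℂ) * z ^ (n + 1)) (pw f μ z - 1))
    {r : ℝ} (hr : r ∈ Ioo 0 1) :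
    ∃ s ≤ μ * (1 - α),
      HasSum (fun n : ℕ ↦ (2 * ((n : ℝ) + 1) - μ * (1 - α)) * b (n + 1) * r ^ (n + 1)) s := by
  obtain ⟨⟨hfA, hinj⟩, hsp⟩ := hf
  have hG : HasFPowerSeriesOnBall (pw f μ)
      (FormalMultilinearSeries.ofScalars ℂ fun n ↦ if n = 0 then 1 else (b n : ℂ)) 0
      (1 : NNReal) := by
    refine hasFPowerSeriesOnBall_ofScalars_of_hasSum one_pos fun z hz ↦ ?_
    rw [← hasSum_nat_add_iff' 1]
    simpa using hrepr z (by simpa [unitDisk] using hz)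
  have hball : Metric.eball (0 : ℂ) (1 : NNReal) = unitDisk := by
    rw [Metric.eball_coe, NNReal.coe_one]; rfl
  have hrD : (r : ℂ) ∈ unitDisk := by simp [unitDisk, abs_of_pos hr.1, hr.2]
  obtain ⟨S, hS, hGS⟩ := exists_hasSum_eq_ofReal (x := fun n ↦ b (n + 1) * r ^ (n + 1))
    (by simpa using hrepr r hrD)
  obtain ⟨T, hT, hGT⟩ := exists_hasSum_eq_ofReal
    (x := fun n ↦ ((n : ℝ) + 1) * b (n + 1) * r ^ (n + 1)) (by
      have := (hG.hasSum_deriv (y := (r : ℂ)) (hball ▸ hrD)).mul_left (r : ℂ)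
      simp only [zero_add, FormalMultilinearSeries.coeff_ofScalars, Nat.add_one_ne_zero,
        if_false, nsmul_eq_mul, smul_eq_mul] at this
      refine this.congr_fun fun n ↦ ?_
      push_cast
      ring)
  have hS0 : 0 ≤ S := hS.nonneg fun n ↦ mul_nonneg (hb _ n.succ_pos) (pow_nonneg hr.1.le _)
  have hT0 : 0 ≤ T := hT.nonneg fun n ↦
    mul_nonneg (mul_nonneg (by positivity) (hb _ n.succ_pos)) (pow_nonneg hr.1.le _)
  have key := hfA.pw_mul_zRatio_sub_one (fun _ ↦ InS.apply_ne_zero ⟨hfA, hinj⟩)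
    (hball ▸ hG.analyticOnNhd) hrD
  rw [eq_add_of_sub_eq hGS, hGT] at key
  have := two_mul_le_of_norm_sub_one_le (k := μ * (1 + S)) (by positivity) hT0
    (by push_cast at key ⊢; linear_combination key) (hsp _ hrD)
  exact ⟨_, by linear_combination this,
    ((hT.mul_left 2).sub (hS.mul_left (μ * (1 - α)))).congr_fun fun n ↦ by ring⟩

theorem stmt0_general (μ α : ℝ) (hμ : 0 < μ)
    (f : ℂ → ℂ) (b : ℕ → ℝ) (hb : ∀ n, 1 ≤ n → 0 ≤ b n)
    (hf : InSp f α)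
    (hrepr : ∀ z ∈ unitDisk,
      HasSum (fun n : ℕ => (b (n + 1) : ℂ) * z ^ (n + 1)) (pw f μ z - 1)) :
    Summable (fun n : ℕ => (2 * ((n : ℝ) + 1) - μ * (1 - α)) * b (n + 1)) ∧
    ∑' n : ℕ, (2 * ((n : ℝ) + 1) - μ * (1 - α)) * b (n + 1) ≤ μ * (1 - α) := by
  have hnonneg : ∀ n, ⌈μ * (1 - α)⌉₊ ≤ n → 0 ≤ (2 * ((n : ℝ) + 1) - μ * (1 - α)) * b (n + 1) :=
    fun n hn ↦ mul_nonneg (by linarith [(Nat.ceil_le.1 hn)]) (hb _ n.succ_pos)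
  exact summable_and_tsum_le_of_sum_range_le hnonneg fun M hM ↦
    sum_range_le_of_hasSum_pow_succ_le hnonneg hM fun r hr ↦
      hf.exists_hasSum_pow_succ_le hμ hb hrepr hr

/-- coefficient necessary condition for `𝒮_p(α)`. -/
theorem stmt0 (μ α : ℝ) (hμ : 0 < μ) (hα₁ : -1 ≤ α) (hα₂ : α ≤ 1)
    (f : ℂ → ℂ) (b : ℕ → ℝ) (hb : ∀ n, 1 ≤ n → 0 ≤ b n)
    (hf : InSp f α)
    (hrepr : ∀ z ∈ unitDisk,
      HasSum (fun n : ℕ => (b (n + 1) : ℂ) * z ^ (n + 1)) (pw f μ z - 1)) :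
    Summable (fun n : ℕ => (2 * ((n : ℝ) + 1) - μ * (1 - α)) * b (n + 1)) ∧
    ∑' n : ℕ, (2 * ((n : ℝ) + 1) - μ * (1 - α)) * b (n + 1) ≤ μ * (1 - α) :=
  stmt0_general μ α hμ f b hb hf hrepr
end
end

section
/- Let μ > 0 and −1 ≤ α < 1. Suppose f ∈ 𝒜 with f(z) ≠ 0 for z ∈ 𝔻 ∖ {0} has the representation (z/f(z))^μ = 1 + Σ_{n=1}^∞ b_n z^n with complex coefficients b_n satisfying Σ_{n=1}^∞ (2n + μ(1−α)) |b_n| ≤ μ(1−α). Then f ∈ 𝒮_p(α). -/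
open Complex Metric Set

noncomputable section

open Filter Topology

/-! Write `G = (z/f)^μ = 1 + ∑ bₙ zⁿ`, `t = ∑ |bₙ|` and `A = ∑ n |bₙ|`. The coefficient condition
gives `2A + μ(1-α)t ≤ μ(1-α)`, while `|G - 1| ≤ t|z| < 1` and `|G'| ≤ A` on the disk. So `G` has a
holomorphic logarithm, and `L = -μ⁻¹ log G` is a logarithm of `f(z)/z`: the zero-free functions
`f(z)/z` and `exp L` have the same modulus and agree at `0`, hence coincide by the maximum modulus
principle. Then `zf'/f - 1 = zL'` and `|zL'| ≤ |z|A / (μ(1 - t|z|)) < (1-α)/2`, which is the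
`𝒮_p(α)` inequality. On `|z| ≤ ρ < 1` the same estimate makes `L` Lipschitz with a constant `C`,
`ρC < 1`; since `z₁/z₂ = exp (L z₂ - L z₁)` whenever `f z₁ = f z₂`, this forces `z₁ = z₂`. -/

theorem norm_cexp_sub_one_le_of_re_nonpos {w : ℂ} (hw : w.re ≤ 0) : ‖exp w - 1‖ ≤ ‖w‖ := by
  have h := (convex_halfSpace_re_le (0 : ℝ)).norm_image_sub_le_of_norm_hasDerivWithin_le
    (f := exp) (C := 1) (fun x _ => (hasDerivAt_exp x).hasDerivWithinAt)
    (fun x hx => by rw [norm_exp]; exact Real.exp_le_one_iff.2 hx) (x := 0) (by simp) hw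
  simpa using h

theorem injOn_mul_cexp_of_norm_deriv_le {L L' : ℂ → ℂ} {ρ C : ℝ} (hρC : ρ * C < 1)
    (hL : ∀ x ∈ closedBall (0 : ℂ) ρ, HasDerivAt L (L' x) x)
    (hL' : ∀ x ∈ closedBall (0 : ℂ) ρ, ‖L' x‖ ≤ C) :
    InjOn (fun z => z * exp (L z)) (closedBall 0 ρ) := by
  have hlip : ∀ x ∈ closedBall (0 : ℂ) ρ, ∀ y ∈ closedBall (0 : ℂ) ρ,
      ‖L y - L x‖ ≤ C * ‖y - x‖ := fun x hx y hy =>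
    (convex_closedBall 0 ρ).norm_image_sub_le_of_norm_hasDerivWithin_le
      (fun z hz => (hL z hz).hasDerivWithinAt) hL' hx hy
  suffices key : ∀ z₁ ∈ closedBall (0 : ℂ) ρ, ∀ z₂ ∈ closedBall (0 : ℂ) ρ,
      z₁ * exp (L z₁) = z₂ * exp (L z₂) → (L z₂ - L z₁).re ≤ 0 → z₁ = z₂ by
    intro z₁ h₁ z₂ h₂ h
    rcases le_total (L z₂ - L z₁).re 0 with hw | hw
    · exact key z₁ h₁ z₂ h₂ h hw
    · refine (key z₂ h₂ z₁ h₁ h.symm ?_).symm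
      rw [← neg_sub, neg_re]
      linarith
  intro z₁ h₁ z₂ h₂ h hw
  rw [mem_closedBall_zero_iff] at h₂
  have hdiff : z₁ - z₂ = z₂ * (exp (L z₂ - L z₁) - 1) := by
    rw [exp_sub, mul_sub, ← mul_div_assoc, ← h, mul_div_cancel_right₀ _ (exp_ne_zero _)]
    ring
  have hle : ‖z₁ - z₂‖ ≤ ρ * C * ‖z₁ - z₂‖ :=
    calc ‖z₁ - z₂‖ ≤ ρ * ‖L z₂ - L z₁‖ := by
          rw [hdiff, norm_mul]
          exact mul_le_mul h₂ (norm_cexp_sub_one_le_of_re_nonpos hw) (norm_nonneg _)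
            ((norm_nonneg _).trans h₂)
      _ ≤ ρ * (C * ‖z₂ - z₁‖) := by
          gcongr
          · exact (norm_nonneg _).trans h₂
          · exact hlip z₁ h₁ z₂ (mem_closedBall_zero_iff.2 h₂)
      _ = ρ * C * ‖z₁ - z₂‖ := by rw [norm_sub_rev]; ring
  have h0 : ‖z₁ - z₂‖ = 0 := by nlinarith [norm_nonneg (z₁ - z₂)]
  exact sub_eq_zero.1 (norm_eq_zero.1 h0)

theorem eqOn_of_norm_eq_of_isPreconnected {E : Type*} [NormedAddCommGroup E] [NormedSpace ℂ E]
    {F U : E → ℂ} {s : Set E} {c : E} (hs : IsPreconnected s) (ho : IsOpen s)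
    (hF : DifferentiableOn ℂ F s) (hU : DifferentiableOn ℂ U s) (hU0 : ∀ z ∈ s, U z ≠ 0)
    (hnorm : ∀ z ∈ s, ‖F z‖ = ‖U z‖) (hc : c ∈ s) (hFc : F c = U c) : EqOn F U s := by
  have hmax : IsMaxOn (norm ∘ fun z => F z * (U z)⁻¹) s c := fun z hz => by
    simp [hnorm z hz, hnorm c hc, hU0 z hz, hU0 c hc]
  intro z hz
  have h := Complex.eqOn_of_isPreconnected_of_isMaxOn_norm hs ho (hF.mul (hU.inv hU0)) hc hmax hz
  simp only [Function.const_apply, Pi.mul_apply, Pi.inv_apply, hFc,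
    mul_inv_cancel₀ (hU0 c hc)] at h
  exact (mul_inv_eq_one₀ (hU0 z hz)).1 h

theorem zRatio_eq_one_add_mul_of_eventuallyEq {f L : ℂ → ℂ} {z L' : ℂ} (hz : z ≠ 0)
    (hf : f =ᶠ[𝓝 z] fun w => w * exp (L w)) (hL : HasDerivAt L L' z) :
    zRatio f z = 1 + z * L' := by
  have hderiv : deriv f z = exp (L z) + z * (exp (L z) * L') := by
    simpa using (((hasDerivAt_id z).mul hL.cexp).congr_of_eventuallyEq hf).deriv
  rw [zRatio, if_neg hz, hderiv, hf.eq_of_nhds]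
  field_simp

theorem norm_sub_one_le_re_sub {w : ℂ} {α : ℝ} (h : ‖w - 1‖ ≤ (1 - α) / 2) :
    ‖w - 1‖ ≤ w.re - α := by
  have hre : -‖w - 1‖ ≤ (w - 1).re := (abs_le.1 (abs_re_le_norm _)).1
  rw [sub_re, one_re] at hre
  linarith

section PowerSeries

variable {c : ℕ → ℂ} {z : ℂ}

theorem norm_tsum_mul_pow_succ_le (hc : Summable fun n => ‖c n‖) (hz : ‖z‖ ≤ 1) :
    ‖∑' n, c n * z ^ (n + 1)‖ ≤ (∑' n, ‖c n‖) * ‖z‖ :=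
  tsum_of_norm_bounded (hc.hasSum.mul_right ‖z‖) fun n => by
    rw [norm_mul, norm_pow]
    gcongr
    exact pow_le_of_le_one (norm_nonneg z) hz n.succ_ne_zero

theorem norm_succ_mul_mul_pow_le (n : ℕ) (hz : ‖z‖ ≤ 1) :
    ‖((n : ℂ) + 1) * c n * z ^ n‖ ≤ ((n : ℝ) + 1) * ‖c n‖ := by
  rw [norm_mul, norm_mul, norm_pow]
  calc ‖(n : ℂ) + 1‖ * ‖c n‖ * ‖z‖ ^ n ≤ ((n : ℝ) + 1) * ‖c n‖ * 1 := by
        gcongr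
        · exact_mod_cast (norm_natCast (n + 1)).le
        · exact pow_le_one₀ (norm_nonneg z) hz
    _ = ((n : ℝ) + 1) * ‖c n‖ := mul_one _

theorem norm_tsum_succ_mul_pow_le (hc : Summable fun n : ℕ => ((n : ℝ) + 1) * ‖c n‖)
    (hz : ‖z‖ ≤ 1) :
    ‖∑' n : ℕ, ((n : ℂ) + 1) * c n * z ^ n‖ ≤ ∑' n : ℕ, ((n : ℝ) + 1) * ‖c n‖ :=
  tsum_of_norm_bounded hc.hasSum fun n => norm_succ_mul_mul_pow_le n hz

theorem hasDerivAt_tsum_mul_pow_succ (hc : Summable fun n : ℕ => ((n : ℝ) + 1) * ‖c n‖)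
    (hz : ‖z‖ < 1) :
    HasDerivAt (fun w => ∑' n, c n * w ^ (n + 1)) (∑' n : ℕ, ((n : ℂ) + 1) * c n * z ^ n) z :=
  hasDerivAt_tsum_of_isPreconnected hc isOpen_ball (convex_ball (0 : ℂ) 1).isPreconnected
    (g' := fun (n : ℕ) w => ((n : ℂ) + 1) * c n * w ^ n)
    (fun n w _ => by
      simpa [mul_comm, mul_left_comm] using (hasDerivAt_pow (n + 1) w).const_mul (c n))
    (fun n w hw => norm_succ_mul_mul_pow_le n (mem_ball_zero_iff.1 hw).le)
    (mem_ball_self one_pos) (by simp) (mem_ball_zero_iff.2 hz)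

end PowerSeries

theorem eqOn_mul_cexp_of_eqOn_pw {f G : ℂ → ℂ} {μ : ℝ} (hμ : μ ≠ 0) (hfA : InA f)
    (hf0 : ∀ z ∈ unitDisk, z ≠ 0 → f z ≠ 0) (hG : DifferentiableOn ℂ G unitDisk)
    (hGslit : ∀ z ∈ unitDisk, G z ∈ slitPlane) (hGpw : EqOn G (pw f μ) unitDisk) :
    EqOn f (fun z => z * exp (-(μ : ℂ)⁻¹ * log (G z))) unitDisk := by
  set U : ℂ → ℂ := fun z => exp (-(μ : ℂ)⁻¹ * log (G z))
  have h0 : (0 : ℂ) ∈ unitDisk := mem_ball_self one_pos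
  have hdslope : DifferentiableOn ℂ (dslope f 0) unitDisk :=
    (Complex.differentiableOn_dslope (isOpen_ball.mem_nhds h0)).2 hfA.1.differentiableOn
  have hU : DifferentiableOn ℂ U unitDisk := ((hG.clog hGslit).const_mul _).cexp
  have hnorm : ∀ z ∈ unitDisk, ‖dslope f 0 z‖ = ‖U z‖ := by
    intro z hz
    by_cases hz0 : z = 0
    · subst hz0
      simp [U, dslope_same, hfA.2.2, hGpw h0, pw]
    have hzf : z / f z ≠ 0 := div_ne_zero hz0 (hf0 z hz hz0)
    have hG_lower : ‖G z‖ = ‖z / f z‖ ^ μ := by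
      rw [hGpw hz, pw, if_neg hz0, norm_cpow_real]
    rw [dslope_of_ne _ hz0, slope_def_field, hfA.2.1, sub_zero, sub_zero, norm_exp]
    have hre : (-(μ : ℂ)⁻¹ * log (G z)).re = -Real.log ‖z / f z‖ := by
      rw [← ofReal_inv, ← ofReal_neg, re_ofReal_mul, log_re, hG_lower,
        Real.log_rpow (norm_pos_iff.2 hzf)]
      field_simp
    rw [hre, Real.exp_neg, Real.exp_log (norm_pos_iff.2 hzf), norm_div, norm_div, inv_div]
  have heq : EqOn (dslope f 0) U unitDisk :=
    eqOn_of_norm_eq_of_isPreconnected (convex_ball (0 : ℂ) 1).isPreconnected isOpen_ball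
      hdslope hU (fun z _ => exp_ne_zero _) hnorm h0
      (by simp [U, dslope_same, hfA.2.2, hGpw h0, pw])
  intro z hz
  have h := sub_smul_dslope f 0 z
  rw [hfA.2.1, sub_zero, sub_zero, smul_eq_mul, heq hz] at h
  exact h.symm

theorem mul_lt_one_and_mul_div_lt_half {μ α t A r : ℝ} (hμ : 0 < μ) (hα : α < 1) (hA : 0 ≤ A)
    (hAt : 2 * A + μ * (1 - α) * t ≤ μ * (1 - α)) (hr₀ : 0 ≤ r) (hr₁ : r < 1) :
    t * r < 1 ∧ r * (μ⁻¹ * (A / (1 - t * r))) < (1 - α) / 2 := by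
  have hμβ : 0 < μ * (1 - α) := mul_pos hμ (by linarith)
  have ht₁ : t ≤ 1 := by nlinarith
  have htr : t * r < 1 := by nlinarith
  refine ⟨htr, ?_⟩
  have hpos : 0 < μ * (1 - t * r) := mul_pos hμ (by linarith)
  calc r * (μ⁻¹ * (A / (1 - t * r))) = r * A / (μ * (1 - t * r)) := by field_simp
    _ < (1 - α) / 2 := by
      rw [div_lt_div_iff₀ hpos two_pos]
      nlinarith [mul_le_mul_of_nonneg_left hAt hr₀, mul_lt_mul_of_pos_left hr₁ hμβ]

theorem inSp_of_eqOn_mul_cexp {f L L' : ℂ → ℂ} {α : ℝ} {B : ℝ → ℝ} (hα : -1 ≤ α)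
    (hfA : InA f) (hf : EqOn f (fun z => z * exp (L z)) unitDisk)
    (hL : ∀ z ∈ unitDisk, HasDerivAt L (L' z) z)
    (hB : ∀ ρ, 0 ≤ ρ → ρ < 1 → ρ * B ρ < (1 - α) / 2)
    (hL' : ∀ ρ, 0 ≤ ρ → ρ < 1 → ∀ z, ‖z‖ ≤ ρ → ‖L' z‖ ≤ B ρ) : InSp f α := by
  refine ⟨⟨hfA, fun z₁ h₁ z₂ h₂ h => ?_⟩, fun z hz => ?_⟩
  · set ρ := max ‖z₁‖ ‖z₂‖
    have hρ₁ : ρ < 1 := max_lt (mem_ball_zero_iff.1 h₁) (mem_ball_zero_iff.1 h₂)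
    have hρ₀ : 0 ≤ ρ := (norm_nonneg z₁).trans (le_max_left _ _)
    have hsub : closedBall (0 : ℂ) ρ ⊆ unitDisk := closedBall_subset_ball hρ₁
    refine injOn_mul_cexp_of_norm_deriv_le (L := L) ?_ (fun x hx => hL x (hsub hx))
      (fun x hx => hL' ρ hρ₀ hρ₁ x (mem_closedBall_zero_iff.1 hx))
      (mem_closedBall_zero_iff.2 (le_max_left _ _))
      (mem_closedBall_zero_iff.2 (le_max_right _ _)) ?_
    · linarith [hB ρ hρ₀ hρ₁]
    · simpa only [hf h₁, hf h₂] using h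
  by_cases hz0 : z = 0
  · rw [zRatio, if_pos hz0, sub_self, norm_zero, one_re]
    linarith [hB 0 le_rfl one_pos]
  have hz₁ := mem_ball_zero_iff.1 hz
  rw [zRatio_eq_one_add_mul_of_eventuallyEq hz0
    (eventuallyEq_of_mem (isOpen_ball.mem_nhds hz) hf) (hL z hz)]
  refine norm_sub_one_le_re_sub ?_
  rw [add_sub_cancel_left, norm_mul]
  exact ((mul_le_mul_of_nonneg_left (hL' _ (norm_nonneg z) hz₁ z le_rfl) (norm_nonneg z)).trans
    (hB ‖z‖ (norm_nonneg z) hz₁).le)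

theorem inSp_of_norm_le {μ α t A : ℝ} {f G G' : ℂ → ℂ} (hμ : 0 < μ) (hα₁ : -1 ≤ α)
    (hα₂ : α < 1) (hfA : InA f) (hf0 : ∀ z ∈ unitDisk, z ≠ 0 → f z ≠ 0)
    (hGpw : EqOn G (pw f μ) unitDisk) (hG : ∀ z ∈ unitDisk, HasDerivAt G (G' z) z)
    (hG₁ : ∀ z ∈ unitDisk, ‖G z - 1‖ ≤ t * ‖z‖) (hG' : ∀ z ∈ unitDisk, ‖G' z‖ ≤ A)
    (hAt : 2 * A + μ * (1 - α) * t ≤ μ * (1 - α)) : InSp f α := by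
  have hA : 0 ≤ A := (norm_nonneg _).trans (hG' 0 (mem_ball_self one_pos))
  have ht : 0 ≤ t := by
    have := (norm_nonneg _).trans (hG₁ (1 / 2) (by norm_num [unitDisk]))
    norm_num at this
    linarith
  have hbound := fun r => mul_lt_one_and_mul_div_lt_half (r := r) hμ hα₂ hA hAt
  have hG_lower : ∀ ρ < 1, ∀ z, ‖z‖ ≤ ρ → 1 - t * ρ ≤ ‖G z‖ := by
    intro ρ hρ z hz
    have hz₁ : z ∈ unitDisk := mem_ball_zero_iff.2 (hz.trans_lt hρ)
    have := norm_sub_norm_le (1 : ℂ) (G z)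
    rw [norm_one, norm_sub_rev] at this
    nlinarith [hG₁ z hz₁, mul_le_mul_of_nonneg_left hz ht]
  have hGslit : ∀ z ∈ unitDisk, G z ∈ slitPlane := fun z hz => by
    have hz₁ := mem_ball_zero_iff.1 hz
    simpa using mem_slitPlane_of_norm_lt_one (z := G z - 1)
      ((hG₁ z hz).trans_lt (hbound ‖z‖ (norm_nonneg z) hz₁).1)
  refine inSp_of_eqOn_mul_cexp hα₁ hfA (L' := fun z => -(μ : ℂ)⁻¹ * ((G z)⁻¹ * G' z))
    (eqOn_mul_cexp_of_eqOn_pw hμ.ne' hfA hf0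
      (fun z hz => (hG z hz).differentiableAt.differentiableWithinAt) hGslit hGpw)
    (fun z hz => ((hasDerivAt_log (hGslit z hz)).comp z (hG z hz)).const_mul _)
    (fun ρ hρ₀ hρ₁ => (hbound ρ hρ₀ hρ₁).2) fun ρ hρ₀ hρ₁ z hz => ?_
  have hz₁ : z ∈ unitDisk := mem_ball_zero_iff.2 (hz.trans_lt hρ₁)
  have hpos : 0 < 1 - t * ρ := by linarith [(hbound ρ hρ₀ hρ₁).1]
  simp only [norm_mul, norm_neg, norm_inv, norm_real, Real.norm_of_nonneg hμ.le]
  rw [inv_mul_eq_div ‖G z‖]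
  gcongr
  exacts [hG' z hz₁, hG_lower ρ hρ₁ z hz]

/-- coefficient sufficient condition for `𝒮_p(α)`. -/
theorem stmt1 (μ α : ℝ) (hμ : 0 < μ) (hα₁ : -1 ≤ α) (hα₂ : α < 1)
    (f : ℂ → ℂ) (hfA : InA f) (hf0 : ∀ z ∈ unitDisk, z ≠ 0 → f z ≠ 0)
    (b : ℕ → ℂ)
    (hrepr : ∀ z ∈ unitDisk,
      HasSum (fun n : ℕ => b (n + 1) * z ^ (n + 1)) (pw f μ z - 1))
    (hsum : Summable (fun n : ℕ =>
      (2 * ((n : ℝ) + 1) + μ * (1 - α)) * ‖b (n + 1)‖))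
    (hineq : ∑' n : ℕ, (2 * ((n : ℝ) + 1) + μ * (1 - α)) * ‖b (n + 1)‖
      ≤ μ * (1 - α)) :
    InSp f α := by
  have hμβ : 0 ≤ μ * (1 - α) := mul_nonneg hμ.le (by linarith)
  have hb : Summable fun n : ℕ => ((n : ℝ) + 1) * ‖b (n + 1)‖ :=
    hsum.of_nonneg_of_le (fun n => by positivity) fun n =>
      mul_le_mul_of_nonneg_right (by linarith [n.cast_nonneg (α := ℝ)]) (norm_nonneg _)
  have hb' : Summable fun n => ‖b (n + 1)‖ :=
    hb.of_nonneg_of_le (fun n => norm_nonneg _) fun n => le_mul_of_one_le_left (norm_nonneg _)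
      (by linarith [n.cast_nonneg (α := ℝ)])
  have hAt : 2 * ∑' n : ℕ, ((n : ℝ) + 1) * ‖b (n + 1)‖ + μ * (1 - α) * ∑' n, ‖b (n + 1)‖
      ≤ μ * (1 - α) := by
    rw [← tsum_mul_left, ← tsum_mul_left, ← (hb.mul_left 2).tsum_add (hb'.mul_left _)]
    exact (tsum_congr fun n => by ring).trans_le hineq
  refine inSp_of_norm_le hμ hα₁ hα₂ hfA hf0 (G := fun z => 1 + ∑' n, b (n + 1) * z ^ (n + 1))
    (fun z hz => by simp [(hrepr z hz).tsum_eq])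
    (fun z hz => (hasDerivAt_tsum_mul_pow_succ hb (mem_ball_zero_iff.1 hz)).const_add 1)
    (fun z hz => by simpa using norm_tsum_mul_pow_succ_le hb' (mem_ball_zero_iff.1 hz).le)
    (fun z hz => norm_tsum_succ_mul_pow_le hb (mem_ball_zero_iff.1 hz).le)
    hAt
end
end

section
/- Let 0 < μ ≤ 1 and let f ∈ 𝒜 with f(z) ≠ 0 for z ∈ 𝔻 ∖ {0} have the representation (z/f(z))^μ = 1 + Σ_{n=1}^∞ b_n z^n with b_n ≥ 0 for all n. Then f ∈ 𝒰(1, μ) if and only if Σ_{n=1}^∞ (n − μ) b_n ≤ μ. -/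
open Complex Metric Set

noncomputable section

/-!
With `g = (z/f)^μ`, differentiating the principal power gives `z f g' = μ g (f - z f')`, so
`f'(z) (z/f(z))^(μ+1) - 1 = g - 1 - z g'/μ = -(1/μ) ∑ (n - μ) b_n z^n`. The derivative of the
power is only available where `z/f(z)` avoids the branch cut `(-∞, 0]`; this holds near `0`
because `z/f(z) → 1`, and the identity theorem spreads the (analytic) identity over the disk.
Since `b_n ≥ 0` and `μ ≤ 1`, all coefficients `(n - μ) b_n` are nonnegative: the coefficient
bound gives `|…| ≤ 1` by the triangle inequality, and conversely on `z = r ∈ (0, 1)` the series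
is real, so its partial sums are at most `μ`, and `r → 1` bounds the partial sums of the
coefficients.
-/

open Filter Topology FormalMultilinearSeries
open scoped ENNReal

section PowerSeries

variable {c : ℕ → ℂ} {g : ℂ → ℂ} {R : ℝ≥0∞}

theorem hasFPowerSeriesOnBall_ofScalars_of_hasSum_s7 (hR : 0 < R)
    (h : ∀ z ∈ eball (0 : ℂ) R, HasSum (fun n => c n * z ^ n) (g z)) :
    HasFPowerSeriesOnBall g (ofScalars ℂ c) 0 R where
  r_le := ENNReal.le_of_forall_nnreal_lt fun r hr => by
    refine le_radius_of_summable_norm _ ?_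
    have hr' : ((r : ℝ) : ℂ) ∈ eball 0 R := by
      simpa [enorm_eq_nnnorm] using hr
    have := summable_norm_iff.mpr (h _ hr').summable
    simpa [ofScalars_norm] using this
  r_pos := hR
  hasSum {y} hy := by simpa [ofScalars_apply_eq, mul_comm] using h y (by simpa using hy)

theorem HasFPowerSeriesOnBall.hasSum_mul_deriv_ofScalars
    (H : HasFPowerSeriesOnBall g (ofScalars ℂ c) 0 R) {z : ℂ} (hz : z ∈ eball 0 R) :
    HasSum (fun n : ℕ => ((n : ℂ) + 1) * c (n + 1) * z ^ (n + 1)) (z * deriv g z) := by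
  have hs := (H.fderiv.hasSum (y := z) (by simpa using hz)).mapL
    (ContinuousLinearMap.apply ℂ ℂ z)
  have hfderiv : fderiv ℂ g (0 + z) z = z * deriv g z := by simp
  simp only [ContinuousLinearMap.apply_apply, hfderiv, derivSeries_apply_diag,
    ofScalars_apply_eq] at hs
  refine hs.congr_fun fun n => ?_
  simp [mul_assoc]

end PowerSeries

theorem tendsto_div_apply_nhdsNE_zero {𝕜 : Type*} [NontriviallyNormedField 𝕜] {f : 𝕜 → 𝕜}
    {f' : 𝕜} (hf : HasDerivAt f f' 0) (hf0 : f 0 = 0) (hf' : f' ≠ 0) :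
    Tendsto (fun z => z / f z) (𝓝[≠] 0) (𝓝 f'⁻¹) := by
  refine ((hasDerivAt_iff_tendsto_slope.mp hf).inv₀ hf').congr fun z => ?_
  simp [slope_def_field, hf0]

section Identity

variable {f g : ℂ → ℂ} {ν : ℂ}

theorem mul_deriv_eq_of_eventuallyEq_cpow {z : ℂ} (hz : z ≠ 0) (hfz : f z ≠ 0)
    (hf : DifferentiableAt ℂ f z) (hg : g =ᶠ[𝓝 z] fun w => (w / f w) ^ ν)
    (hslit : z / f z ∈ slitPlane) :
    z * f z * deriv g z = ν * g z * (f z - z * deriv f z) := by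
  have hq : HasDerivAt (fun w => w / f w) ((1 * f z - z * deriv f z) / f z ^ 2) z :=
    (hasDerivAt_id z).div hf.hasDerivAt hfz
  rw [hg.deriv_eq, (hq.cpow_const hslit).deriv, hg.eq_of_nhds,
    show ν = ν - 1 + 1 by ring, cpow_add _ _ (div_ne_zero hz hfz), cpow_one, add_sub_cancel_right]
  field_simp

theorem mul_deriv_eq_of_eqOn_cpow {U : Set ℂ} (hU : IsOpen U) (hUc : IsPreconnected U)
    (h0U : 0 ∈ U) (hf : AnalyticOnNhd ℂ f U) (hf0 : f 0 = 0) (hf'0 : deriv f 0 = 1)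
    (hfne : ∀ z ∈ U, z ≠ 0 → f z ≠ 0) (hg : AnalyticOnNhd ℂ g U)
    (hgf : ∀ z ∈ U, z ≠ 0 → g z = (z / f z) ^ ν) {z : ℂ} (hz : z ∈ U) :
    z * f z * deriv g z = ν * g z * (f z - z * deriv f z) := by
  set E : ℂ → ℂ := fun z => z * f z * deriv g z - ν * g z * (f z - z * deriv f z)
  have hE : AnalyticOnNhd ℂ E U := fun w hw => by
    have := hf w hw; have := hg w hw; have := hf.deriv w hw; have := hg.deriv w hw
    fun_prop
  have hU' : IsOpen (U \ {0}) := hU.sdiff isClosed_singleton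
  have hslit : ∀ᶠ w in 𝓝[≠] 0, w / f w ∈ slitPlane := by
    have h := tendsto_div_apply_nhdsNE_zero (hf 0 h0U).differentiableAt.hasDerivAt hf0
      (by simp [hf'0])
    rw [hf'0, inv_one] at h
    exact h.eventually (isOpen_slitPlane.mem_nhds one_mem_slitPlane)
  have hE0 : ∀ᶠ w in 𝓝[≠] 0, E w = 0 := by
    filter_upwards [hslit, self_mem_nhdsWithin, nhdsWithin_le_nhds (hU.mem_nhds h0U)]
      with w hw hw0 hwU
    refine sub_eq_zero.mpr (mul_deriv_eq_of_eventuallyEq_cpow hw0 (hfne w hwU hw0)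
      (hf w hwU).differentiableAt ?_ hw)
    filter_upwards [hU'.mem_nhds ⟨hwU, hw0⟩] with x ⟨hxU, hx0⟩ using hgf x hxU hx0
  exact sub_eq_zero.mp (hE.eqOn_zero_of_preconnected_of_frequently_eq_zero hUc h0U
    hE0.frequently hz)

end Identity

theorem eball_zero_one_eq_unitDisk : eball (0 : ℂ) 1 = unitDisk := by
  simp [unitDisk, ← eball_ofReal]

section Representation

variable {μ : ℝ} {f : ℂ → ℂ} {b : ℕ → ℝ}

theorem hasFPowerSeriesOnBall_pw
    (hrepr : ∀ z ∈ unitDisk,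
      HasSum (fun n : ℕ => (b (n + 1) : ℂ) * z ^ (n + 1)) (pw f μ z - 1)) :
    HasFPowerSeriesOnBall (pw f μ) (ofScalars ℂ fun n => if n = 0 then 1 else (b n : ℂ)) 0 1 :=
  hasFPowerSeriesOnBall_ofScalars_of_hasSum_s7 one_pos fun z hz =>
    (hasSum_nat_add_iff' 1).mp <| by
      simpa using hrepr z (eball_zero_one_eq_unitDisk ▸ hz)

theorem deriv_mul_cpow_succ_sub_one_eq (hμ : μ ≠ 0) (hfA : InA f)
    (hf0 : ∀ z ∈ unitDisk, z ≠ 0 → f z ≠ 0) (hpw : AnalyticOnNhd ℂ (pw f μ) unitDisk)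
    {z : ℂ} (hz : z ∈ unitDisk) :
    deriv f z * (if z = 0 then 1 else (z / f z) ^ ((μ : ℂ) + 1)) - 1
      = (pw f μ z - 1) - (μ : ℂ)⁻¹ * (z * deriv (pw f μ) z) := by
  by_cases hz0 : z = 0
  · simp [hz0, pw, hfA.2.2]
  have hfz := hf0 z hz hz0
  have hpwz : pw f μ z = (z / f z) ^ (μ : ℂ) := if_neg hz0
  have hid := mul_deriv_eq_of_eqOn_cpow isOpen_ball (convex_ball 0 1).isPreconnected
    (mem_ball_self one_pos) hfA.1 hfA.2.1 hfA.2.2 hf0 hpw (fun w _ hw => if_neg hw) hz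
  have hμC : (μ : ℂ) ≠ 0 := by exact_mod_cast hμ
  rw [if_neg hz0, cpow_add _ _ (div_ne_zero hz0 hfz), cpow_one, hpwz]
  rw [hpwz] at hid
  field_simp
  linear_combination hid

theorem hasSum_deriv_mul_cpow_succ_sub_one (hμ : μ ≠ 0) (hfA : InA f)
    (hf0 : ∀ z ∈ unitDisk, z ≠ 0 → f z ≠ 0)
    (hrepr : ∀ z ∈ unitDisk,
      HasSum (fun n : ℕ => (b (n + 1) : ℂ) * z ^ (n + 1)) (pw f μ z - 1))
    {z : ℂ} (hz : z ∈ unitDisk) :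
    HasSum (fun n : ℕ => ((((n : ℝ) + 1 - μ) * b (n + 1) : ℝ) : ℂ) * z ^ (n + 1))
      (-μ * (deriv f z * (if z = 0 then 1 else (z / f z) ^ ((μ : ℂ) + 1)) - 1)) := by
  have H := hasFPowerSeriesOnBall_pw hrepr
  have hpw : AnalyticOnNhd ℂ (pw f μ) unitDisk :=
    eball_zero_one_eq_unitDisk ▸ H.analyticOnNhd
  have hderiv := H.hasSum_mul_deriv_ofScalars (eball_zero_one_eq_unitDisk.symm ▸ hz)
  have hμC : (μ : ℂ) ≠ 0 := by exact_mod_cast hμ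
  rw [deriv_mul_cpow_succ_sub_one_eq hμ hfA hf0 hpw hz]
  refine (((hrepr z hz).sub (hderiv.mul_left (μ : ℂ)⁻¹)).mul_left (-(μ : ℂ))).congr_fun
    fun n => ?_
  simp only [Nat.add_eq_zero_iff, one_ne_zero, and_false, if_false]
  push_cast
  field_simp
  ring

end Representation

theorem sum_range_le_of_sum_range_mul_pow_le {a : ℕ → ℝ} {M : ℝ} (N : ℕ)
    (h : ∀ r ∈ Ioo (0 : ℝ) 1, ∑ n ∈ Finset.range N, a n * r ^ (n + 1) ≤ M) :
    ∑ n ∈ Finset.range N, a n ≤ M := by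
  have hcont : Tendsto (fun r : ℝ => ∑ n ∈ Finset.range N, a n * r ^ (n + 1)) (𝓝[<] 1)
      (𝓝 (∑ n ∈ Finset.range N, a n)) := by
    have hc : Continuous fun r : ℝ => ∑ n ∈ Finset.range N, a n * r ^ (n + 1) := by fun_prop
    simpa using (hc.tendsto 1).mono_left nhdsWithin_le_nhds
  refine le_of_tendsto hcont ?_
  filter_upwards [Ioo_mem_nhdsLT zero_lt_one] with r hr using h r hr

/-- coefficient characterization of `𝒰(1, μ)` for nonnegative coefficients. -/
theorem stmt7 (μ : ℝ) (hμ₀ : 0 < μ) (hμ₁ : μ ≤ 1)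
    (f : ℂ → ℂ) (hfA : InA f) (hf0 : ∀ z ∈ unitDisk, z ≠ 0 → f z ≠ 0)
    (b : ℕ → ℝ) (hb : ∀ n, 1 ≤ n → 0 ≤ b n)
    (hrepr : ∀ z ∈ unitDisk,
      HasSum (fun n : ℕ => (b (n + 1) : ℂ) * z ^ (n + 1)) (pw f μ z - 1)) :
    InU f 1 μ ↔
      (Summable (fun n : ℕ => (((n : ℝ) + 1) - μ) * b (n + 1)) ∧
       ∑' n : ℕ, (((n : ℝ) + 1) - μ) * b (n + 1) ≤ μ) := by
  set a : ℕ → ℝ := fun n => (((n : ℝ) + 1) - μ) * b (n + 1)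
  have ha : ∀ n, 0 ≤ a n := fun n =>
    mul_nonneg (by linarith [n.cast_nonneg (α := ℝ)]) (hb _ n.succ_pos)
  have hseries := fun z (hz : z ∈ unitDisk) =>
    hasSum_deriv_mul_cpow_succ_sub_one hμ₀.ne' hfA hf0 hrepr hz
  constructor
  · rintro ⟨-, -, hU⟩
    have hpartial (N : ℕ) : ∑ n ∈ Finset.range N, a n ≤ μ := by
      refine sum_range_le_of_sum_range_mul_pow_le N fun r hr => ?_
      have hr' : (r : ℂ) ∈ unitDisk := by
        simpa [unitDisk, abs_of_pos hr.1] using hr.2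
      have hre := Complex.hasSum_re (hseries r hr')
      simp only [← ofReal_pow, ← ofReal_mul, ofReal_re] at hre
      calc ∑ n ∈ Finset.range N, a n * r ^ (n + 1)
          ≤ _ := sum_le_hasSum _ (fun n _ => mul_nonneg (ha n) (pow_nonneg hr.1.le _)) hre
        _ ≤ ‖-(μ : ℂ) * _‖ := re_le_norm _
        _ ≤ μ := by
          rw [norm_mul, norm_neg, norm_real, Real.norm_of_nonneg hμ₀.le]
          exact mul_le_of_le_one_right hμ₀.le (hU r hr')
    exact ⟨summable_of_sum_range_le ha hpartial, Real.tsum_le_of_sum_range_le ha hpartial⟩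
  · rintro ⟨hsum, hle⟩
    refine ⟨hfA, hf0, fun z hz => ?_⟩
    have hz1 : ‖z‖ ≤ 1 := (mem_ball_zero_iff.mp hz).le
    have hbound := (hseries z hz).norm_le_of_bounded hsum.hasSum fun n => by
      rw [norm_mul, norm_real, Real.norm_of_nonneg (ha n), norm_pow]
      exact mul_le_of_le_one_right (ha n) (pow_le_one₀ (norm_nonneg z) hz1)
    rw [norm_mul, norm_neg, norm_real, Real.norm_of_nonneg hμ₀.le] at hbound
    exact le_of_mul_le_mul_left (by linarith) hμ₀
end
end

section
/- Let 0 ≤ α < 1 and let f(z) = z − Σ_{n=2}^∞ c_n z^n with c_n ≥ 0 for all n ≥ 2 be analytic on 𝔻. If f ∈ 𝒮*(α), then f ∈ 𝒰(1−α, 1), i.e. |f'(z)(z/f(z))² − 1| ≤ 1 − α for all z ∈ 𝔻. -/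
open Complex Metric Set

noncomputable section

/-! Write `f z = z (1 - A z)` with `A z = ∑ c (n + 2) z^(n+1)`. Then `f' = 1 - 2A - C` with
`C z = ∑ n c (n + 2) z^(n+1)`, and `f'(z) (z / f z)^2 - 1 = -(A^2 + C) / (1 - A)^2`.
The coefficients being nonnegative, `|A z| ≤ A r` and `|C z| ≤ C r` for `r = |z|`, and
`1 - A r > 0` since `A` is continuous on `[0, r]`, vanishes at `0` and `f` has no zeros on `(0, r]`.
Starlikeness at the real point `r` says `α (1 - A r) < 1 - 2 A r - C r`, which is exactly what
makes `(A r ^ 2 + C r) / (1 - A r)^2 ≤ 1 - α`. -/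

section Summability

variable {b : ℕ → ℝ} {s t : ℝ}

theorem summable_mul_pow_of_abs_le (hs : Summable fun n => b n * s ^ n) (ht : |t| ≤ s) :
    Summable fun n => b n * t ^ n := by
  refine .of_norm_bounded hs.abs fun n => ?_
  rw [Real.norm_eq_abs, abs_mul, abs_mul, abs_pow, abs_pow]
  exact mul_le_mul_of_nonneg_left (pow_le_pow_left₀ (abs_nonneg t)
    (ht.trans (le_abs_self s)) n) (abs_nonneg _)

theorem summable_natCast_mul_mul_pow_of_abs_lt (hs : Summable fun n => b n * s ^ n)
    (ht : |t| < s) : Summable fun n => n * b n * t ^ n := by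
  have hs0 : 0 < s := (abs_nonneg t).trans_lt ht
  obtain ⟨M, hM⟩ : ∃ M, ∀ n, |b n * s ^ n| ≤ M :=
    ⟨∑' n, |b n * s ^ n|, fun n => hs.abs.le_tsum n fun _ _ => abs_nonneg _⟩
  have hgeom : Summable fun n : ℕ => M * ((n : ℝ) ^ 1 * (|t| / s) ^ n) :=
    (summable_pow_mul_geometric_of_norm_lt_one 1 (by
      rw [Real.norm_eq_abs, abs_div, abs_abs, abs_of_pos hs0, div_lt_one hs0]; exact ht)).mul_left M
  refine .of_norm_bounded hgeom fun n => ?_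
  have hterm : ‖(n : ℝ) * b n * t ^ n‖ = n * (|b n * s ^ n| * (|t| / s) ^ n) := by
    rw [Real.norm_eq_abs, abs_mul, abs_mul, abs_mul, abs_pow, abs_pow, Nat.abs_cast,
      abs_of_pos hs0, div_pow]
    field_simp
  calc ‖(n : ℝ) * b n * t ^ n‖ = (n * (|t| / s) ^ n) * |b n * s ^ n| := by rw [hterm]; ring
    _ ≤ (n * (|t| / s) ^ n) * M := by gcongr; exact hM n
    _ = M * ((n : ℝ) ^ 1 * (|t| / s) ^ n) := by ring

end Summability

section SumPowSucc

variable {𝕜 : Type*} [RCLike 𝕜] {b : ℕ → ℝ} {z : 𝕜}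

def sumPowSucc (b : ℕ → ℝ) (z : 𝕜) : 𝕜 := ∑' n, (b n : 𝕜) * z ^ (n + 1)

theorem sumPowSucc_ofReal (b : ℕ → ℝ) (r : ℝ) :
    sumPowSucc b (r : ℂ) = ((sumPowSucc b r : ℝ) : ℂ) := by
  simp [sumPowSucc, Complex.ofReal_tsum]

theorem sumPowSucc_zero (b : ℕ → ℝ) : sumPowSucc b (0 : 𝕜) = 0 := by
  simp [sumPowSucc]

theorem sumPowSucc_nonneg (hb0 : ∀ n, 0 ≤ b n) {r : ℝ} (hr : 0 ≤ r) : 0 ≤ sumPowSucc b r :=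
  tsum_nonneg fun n => mul_nonneg (hb0 n) (pow_nonneg hr _)

theorem norm_coeff_mul_pow_succ (b : ℕ → ℝ) (z : 𝕜) (n : ℕ) :
    ‖(b n : 𝕜) * z ^ (n + 1)‖ = ‖z‖ * |b n * ‖z‖ ^ n| := by
  rw [norm_mul, norm_pow, RCLike.norm_ofReal, abs_mul, abs_pow, abs_norm, pow_succ]
  ring

theorem summable_coeff_mul_pow_succ (hb : Summable fun n => b n * ‖z‖ ^ n) :
    Summable fun n => (b n : 𝕜) * z ^ (n + 1) :=
  .of_norm <| (hb.abs.mul_left ‖z‖).congr fun n => (norm_coeff_mul_pow_succ b z n).symm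

theorem norm_sumPowSucc_le (hb0 : ∀ n, 0 ≤ b n) (hb : Summable fun n => b n * ‖z‖ ^ n) :
    ‖sumPowSucc b z‖ ≤ sumPowSucc b ‖z‖ := by
  have hnorm : ∀ n, ‖(b n : 𝕜) * z ^ (n + 1)‖ = b n * ‖z‖ ^ (n + 1) := fun n => by
    rw [norm_coeff_mul_pow_succ, abs_of_nonneg (by have := hb0 n; positivity), pow_succ]; ring
  refine (norm_tsum_le_tsum_norm ?_).trans_eq ?_
  · exact (hb.mul_left ‖z‖).congr fun n => by rw [hnorm, pow_succ]; ring
  · simp only [sumPowSucc, hnorm, RCLike.ofReal_real_eq_id, id]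

theorem continuousOn_sumPowSucc {r : ℝ} (hr : 0 ≤ r) (hb : Summable fun n => b n * r ^ n) :
    ContinuousOn (sumPowSucc b : 𝕜 → 𝕜) (closedBall 0 r) := by
  refine continuousOn_tsum (fun n => by fun_prop) (hb.abs.mul_left r) fun n z hz => ?_
  rw [mem_closedBall_zero_iff] at hz
  rw [norm_coeff_mul_pow_succ, abs_mul, abs_mul, abs_pow, abs_pow, abs_norm, abs_of_nonneg hr]
  gcongr

theorem sumPowSucc_lt_one_of_ne_one {r : ℝ} (hr : 0 ≤ r) (hb : Summable fun n => b n * r ^ n)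
    (hne : ∀ t ∈ Ioc 0 r, sumPowSucc b t ≠ 1) : sumPowSucc b r < 1 := by
  by_contra! hle
  have hcont : ContinuousOn (sumPowSucc b : ℝ → ℝ) (Icc 0 r) :=
    (continuousOn_sumPowSucc hr hb).mono fun t ht => by
      rw [mem_closedBall_zero_iff, Real.norm_eq_abs, abs_of_nonneg ht.1]; exact ht.2
  obtain ⟨t, ⟨ht0, htr⟩, ht⟩ := intermediate_value_Icc hr hcont
    ⟨(sumPowSucc_zero b).trans_le zero_le_one, hle⟩
  rcases ht0.eq_or_lt with rfl | ht0
  · exact zero_ne_one ((sumPowSucc_zero b).symm.trans ht)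
  · exact hne t ⟨ht0, htr⟩ ht

theorem summable_natCast_mul_mul_pow (hb : ∀ t : ℝ, |t| < 1 → Summable fun n => b n * t ^ n)
    {t : ℝ} (ht : |t| < 1) : Summable fun n => n * b n * t ^ n :=
  summable_natCast_mul_mul_pow_of_abs_lt (hb ((|t| + 1) / 2) (by
    rw [abs_of_nonneg (by positivity)]; linarith)) (by linarith)

theorem sumPowSucc_natCast_add_two_mul
    (hb : ∀ t : ℝ, |t| < 1 → Summable fun n => b n * t ^ n) (hz : ‖z‖ < 1) :
    sumPowSucc (fun n => (n + 2) * b n) z =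
      sumPowSucc (fun n => n * b n) z + 2 * sumPowSucc b z := by
  have hz' : |‖z‖| < 1 := by rwa [abs_norm]
  rw [sumPowSucc, sumPowSucc, sumPowSucc, ← tsum_mul_left,
    ← (summable_coeff_mul_pow_succ (summable_natCast_mul_mul_pow hb hz')).tsum_add
      ((summable_coeff_mul_pow_succ (hb _ hz')).mul_left 2)]
  exact tsum_congr fun n => by push_cast; ring

theorem hasDerivAt_mul_sumPowSucc (hb : ∀ t : ℝ, |t| < 1 → Summable fun n => b n * t ^ n)
    (hz : ‖z‖ < 1) :
    HasDerivAt (fun w => w * sumPowSucc b w) (sumPowSucc (fun n => (n + 2) * b n) z) z := by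
  obtain ⟨R, hzR, hR1⟩ := exists_between hz
  have hR0 : 0 < R := (norm_nonneg z).trans_lt hzR
  have hR : |R| < 1 := by rwa [abs_of_pos hR0]
  have hu : Summable fun n => R * |(n + 2) * b n * R ^ n| :=
    (((summable_natCast_mul_mul_pow hb hR).add ((hb R hR).mul_left 2)).abs.mul_left R).congr
      fun n => by rw [add_mul, add_mul, mul_assoc 2]
  have hderiv : ∀ n : ℕ, ∀ w ∈ ball (0 : 𝕜) R, HasDerivAt (fun w => (b n : 𝕜) * w ^ (n + 2))
      (((n + 2 : ℝ) * b n : ℝ) * w ^ (n + 1)) w := fun n w _ => by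
    refine ((hasDerivAt_pow (n + 2) w).const_mul (b n : 𝕜)).congr_deriv ?_
    rw [show n + 2 - 1 = n + 1 by omega]
    push_cast; ring
  have hbound : ∀ n : ℕ, ∀ w ∈ ball (0 : 𝕜) R,
      ‖(((n + 2 : ℝ) * b n : ℝ) : 𝕜) * w ^ (n + 1)‖ ≤ R * |(n + 2) * b n * R ^ n| := by
    intro n w hw
    rw [mem_ball_zero_iff] at hw
    rw [norm_coeff_mul_pow_succ (fun n : ℕ => (n + 2 : ℝ) * b n)]
    simp only [abs_mul, abs_pow, abs_norm, abs_of_pos hR0]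
    gcongr
  have hsum := hasDerivAt_tsum_of_isPreconnected hu isOpen_ball (convex_ball 0 R).isPreconnected
    hderiv hbound (mem_ball_self hR0) (by simp) (mem_ball_zero_iff.mpr hzR)
  have hfun : (fun w => w * sumPowSucc b w) = fun w => ∑' n, (b n : 𝕜) * w ^ (n + 2) := by
    funext w
    rw [sumPowSucc, ← tsum_mul_left]
    exact tsum_congr fun n => by ring
  rw [hfun]
  exact hsum

end SumPowSucc

theorem sq_add_div_one_sub_sq_le {α A C : ℝ} (hα : 0 ≤ α) (hA : 0 ≤ A) (hA1 : A < 1)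
    (h : α < (1 - (C + 2 * A)) / (1 - A)) : (A ^ 2 + C) / (1 - A) ^ 2 ≤ 1 - α := by
  have h1A : 0 < 1 - A := by linarith
  have h' : α * (1 - A) < 1 - (C + 2 * A) := (lt_div_iff₀ h1A).mp h
  rw [div_le_iff₀ (by positivity)]
  nlinarith [mul_nonneg (mul_nonneg hα h1A.le) hA]

theorem norm_sq_add_div_one_sub_sq_le {𝕜 : Type*} [NormedField 𝕜] {A C : 𝕜} {A' C' : ℝ}
    (hA : ‖A‖ ≤ A') (hA1 : A' < 1) (hC : ‖C‖ ≤ C') :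
    ‖(A ^ 2 + C) / (1 - A) ^ 2‖ ≤ (A' ^ 2 + C') / (1 - A') ^ 2 := by
  have h1A : 0 < 1 - A' := by linarith
  have hden : 1 - A' ≤ ‖1 - A‖ := by
    have := norm_sub_norm_le (1 : 𝕜) A
    rw [norm_one] at this
    linarith
  rw [norm_div, norm_pow]
  gcongr
  · exact add_nonneg (sq_nonneg _) ((norm_nonneg _).trans hC)
  · calc ‖A ^ 2 + C‖ ≤ ‖A‖ ^ 2 + ‖C‖ := (norm_add_le _ _).trans_eq (by rw [norm_pow])
      _ ≤ A' ^ 2 + C' := by gcongr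

theorem ofReal_mem_unitDisk {t : ℝ} (ht : |t| < 1) : (t : ℂ) ∈ unitDisk := by
  rwa [unitDisk, mem_ball_zero_iff, Complex.norm_real, Real.norm_eq_abs]

def HasSeriesExpansion (f : ℂ → ℂ) (a : ℕ → ℝ) : Prop :=
  ∀ z ∈ unitDisk, HasSum (fun n => (a n : ℂ) * z ^ (n + 2)) (z - f z)

namespace HasSeriesExpansion

variable {f : ℂ → ℂ} {a : ℕ → ℝ} {z : ℂ}

theorem eq_mul_one_sub_sumPowSucc (hf : HasSeriesExpansion f a) (hz : z ∈ unitDisk) :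
    f z = z * (1 - sumPowSucc a z) := by
  have hS : z * sumPowSucc a z = z - f z := by
    rw [sumPowSucc, RCLike.ofReal_eq_complex_ofReal, ← tsum_mul_left, ← (hf z hz).tsum_eq]
    exact tsum_congr fun n => by ring
  linear_combination hS

theorem summable_coeff_mul_pow (hf : HasSeriesExpansion f a) {t : ℝ} (ht : |t| < 1) :
    Summable fun n => a n * t ^ n := by
  obtain ⟨s, hts, hs1⟩ := exists_between ht
  have hs : 0 < s := (abs_nonneg t).trans_lt hts
  have hsD : (s : ℂ) ∈ unitDisk := ofReal_mem_unitDisk (by rwa [abs_of_pos hs])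
  have hsum : Summable fun n => a n * s ^ (n + 2) :=
    Complex.summable_ofReal.mp <| (hf s hsD).summable.congr fun n => by push_cast; rfl
  refine summable_mul_pow_of_abs_le ?_ hts.le
  exact (summable_mul_right_iff (pow_ne_zero 2 hs.ne')).mp <|
    hsum.congr fun n => by ring

theorem hasDerivAt (hf : HasSeriesExpansion f a) (hz : z ∈ unitDisk) :
    HasDerivAt f (1 - sumPowSucc (fun n => (n + 2) * a n) z) z := by
  have hsub := (hasDerivAt_id z).sub
    (hasDerivAt_mul_sumPowSucc (fun t => hf.summable_coeff_mul_pow) (mem_ball_zero_iff.mp hz))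
  refine hsub.congr_of_eventuallyEq ?_
  filter_upwards [isOpen_ball.mem_nhds hz] with w hw
  rw [hf.eq_mul_one_sub_sumPowSucc hw, Pi.sub_apply, id]
  ring

theorem zRatio_eq (hf : HasSeriesExpansion f a) (hz : z ∈ unitDisk) (hz0 : z ≠ 0) :
    zRatio f z = (1 - sumPowSucc (fun n => (n + 2) * a n) z) / (1 - sumPowSucc a z) := by
  rw [zRatio, if_neg hz0, (hf.hasDerivAt hz).deriv, hf.eq_mul_one_sub_sumPowSucc hz,
    mul_div_mul_left _ _ hz0]

theorem re_zRatio_ofReal (hf : HasSeriesExpansion f a) {r : ℝ} (hr : r ∈ Ioo 0 1) :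
    (zRatio f r).re = (1 - (sumPowSucc (fun n => n * a n) r + 2 * sumPowSucc a r)) /
      (1 - sumPowSucc a r) := by
  have hrD : (r : ℂ) ∈ unitDisk := ofReal_mem_unitDisk (by rw [abs_of_pos hr.1]; exact hr.2)
  rw [hf.zRatio_eq hrD (Complex.ofReal_ne_zero.mpr hr.1.ne'),
    sumPowSucc_natCast_add_two_mul (fun t => hf.summable_coeff_mul_pow) (mem_ball_zero_iff.mp hrD),
    sumPowSucc_ofReal, sumPowSucc_ofReal]
  norm_cast

theorem deriv_mul_div_sq_sub_one (hf : HasSeriesExpansion f a) (hz : z ∈ unitDisk) (hfz : f z ≠ 0) :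
    deriv f z * (z / f z) ^ 2 - 1 =
      -((sumPowSucc a z ^ 2 + sumPowSucc (fun n => n * a n) z) / (1 - sumPowSucc a z) ^ 2) := by
  have hfz' := hfz
  rw [hf.eq_mul_one_sub_sumPowSucc hz] at hfz'
  have hz0 : z ≠ 0 := left_ne_zero_of_mul hfz'
  have hA : 1 - sumPowSucc a z ≠ 0 := right_ne_zero_of_mul hfz'
  rw [(hf.hasDerivAt hz).deriv, hf.eq_mul_one_sub_sumPowSucc hz,
    sumPowSucc_natCast_add_two_mul (fun t => hf.summable_coeff_mul_pow) (mem_ball_zero_iff.mp hz)]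
  field_simp
  ring

theorem sumPowSucc_lt_one (hf : HasSeriesExpansion f a)
    (hne : ∀ z ∈ unitDisk, z ≠ 0 → f z ≠ 0) {r : ℝ} (hr : r ∈ Ioo 0 1) : sumPowSucc a r < 1 := by
  have hr' : |r| < 1 := by rw [abs_of_pos hr.1]; exact hr.2
  refine sumPowSucc_lt_one_of_ne_one hr.1.le (hf.summable_coeff_mul_pow hr') fun t ht h1 => ?_
  have htD : (t : ℂ) ∈ unitDisk :=
    ofReal_mem_unitDisk (by rw [abs_of_pos ht.1]; exact ht.2.trans_lt hr.2)
  refine hne t htD (Complex.ofReal_ne_zero.mpr ht.1.ne') ?_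
  rw [hf.eq_mul_one_sub_sumPowSucc htD, sumPowSucc_ofReal, h1]
  simp

theorem norm_deriv_mul_div_sq_sub_one_le (hf : HasSeriesExpansion f a) (ha : ∀ n, 0 ≤ a n)
    (hz : z ∈ unitDisk) (hfz : f z ≠ 0) (hA : sumPowSucc a ‖z‖ < 1) :
    ‖deriv f z * (z / f z) ^ 2 - 1‖ ≤
      (sumPowSucc a ‖z‖ ^ 2 + sumPowSucc (fun n => n * a n) ‖z‖) / (1 - sumPowSucc a ‖z‖) ^ 2 := by
  have hz' : |‖z‖| < 1 := by rw [abs_norm]; exact mem_ball_zero_iff.mp hz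
  rw [hf.deriv_mul_div_sq_sub_one hz hfz, norm_neg]
  exact norm_sq_add_div_one_sub_sq_le (norm_sumPowSucc_le ha (hf.summable_coeff_mul_pow hz')) hA
    (norm_sumPowSucc_le (fun n => mul_nonneg n.cast_nonneg (ha n))
      (summable_natCast_mul_mul_pow (fun t => hf.summable_coeff_mul_pow) hz'))

end HasSeriesExpansion

/-- starlike functions of order `α` with negative coefficients
belong to `𝒰(1-α, 1)`. -/
theorem stmt9 (α : ℝ) (hα₀ : 0 ≤ α) (hα₁ : α < 1)
    (f : ℂ → ℂ) (c : ℕ → ℝ) (hc : ∀ n, 2 ≤ n → 0 ≤ c n)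
    (hrepr : ∀ z ∈ unitDisk,
      HasSum (fun n : ℕ => (c (n + 2) : ℂ) * z ^ (n + 2)) (z - f z))
    (hf : InSstar f α) :
    InU f (1 - α) 1 := by
  obtain ⟨⟨hfA, hinj⟩, hstar⟩ := hf
  have hexp : HasSeriesExpansion f (fun n => c (n + 2)) := hrepr
  have hne : ∀ z ∈ unitDisk, z ≠ 0 → f z ≠ 0 := fun z hz hz0 hfz =>
    hz0 (hinj hz (mem_ball_self one_pos) (hfz.trans hfA.2.1.symm))
  refine ⟨hfA, hne, fun z hz => ?_⟩
  rcases eq_or_ne z 0 with rfl | hz0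
  · rw [if_pos rfl, hfA.2.2, mul_one, sub_self, norm_zero]
    linarith
  have hr : ‖z‖ ∈ Ioo 0 1 := ⟨norm_pos_iff.mpr hz0, mem_ball_zero_iff.mp hz⟩
  have hc' : ∀ n, 0 ≤ c (n + 2) := fun n => hc _ (Nat.le_add_left 2 n)
  have hA := hexp.sumPowSucc_lt_one hne hr
  have hα := hstar _ (ofReal_mem_unitDisk (t := ‖z‖) (by rw [abs_norm]; exact hr.2))
  rw [hexp.re_zRatio_ofReal hr] at hα
  rw [if_neg hz0, show ((1 : ℝ) : ℂ) + 1 = (2 : ℕ) by norm_num, Complex.cpow_natCast]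
  exact (hexp.norm_deriv_mul_div_sq_sub_one_le hc' hz (hne z hz hz0) hA).trans
    (sq_add_div_one_sub_sq_le hα₀ (sumPowSucc_nonneg hc' hr.1.le) hA hα)
end
end

section
/- Let 2/3 < β ≤ 1 and f ∈ ℱ_β. Then ‖f‖ ≤ 2(3β − 2), i.e. (1 − |z|²)|f''(z)/f'(z)| ≤ 2(3β − 2) for all z ∈ 𝔻. -/
open Complex Metric Set

noncomputable section

/-- `f ∈ ℱ_β`: `f ∈ 𝒜`, locally univalent, with `Re(1 + z f''(z)/f'(z)) < (3/2) β`. -/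
def InF (f : ℂ → ℂ) (β : ℝ) : Prop :=
  InA f ∧ ∀ z ∈ unitDisk, deriv f z ≠ 0 ∧
    (1 + z * deriv (deriv f) z / deriv f z).re < 3 / 2 * β

/-!
With `p = f''/f'` and `c = (3β - 2)/2`, the function `w(z) = z p(z)` vanishes at `0` and takes
values in the half-plane `Re w < c`. The Möbius map `w ↦ w / (2c - w)` sends that half-plane into
the unit disk, so `z ↦ z p(z) / (2c - z p(z))` is a Schwarz function and, by the Schwarz lemma,
`|p| ≤ |2c - z p| ≤ 2c + |z| |p|`. Hence `(1 - |z|) |p(z)| ≤ 2c`, and multiplying by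
`1 + |z| < 2` gives `(1 - |z|²) |p(z)| ≤ 4c = 2(3β - 2)`.
-/

theorem dslope_smul_self_zero {E : Type*} [NormedAddCommGroup E] [NormedSpace ℂ E]
    {h : ℂ → E} (hh : DifferentiableAt ℂ h 0) : dslope (fun z => z • h z) 0 = h := by
  funext z
  rcases eq_or_ne z 0 with rfl | hz
  · rw [dslope_same]
    have : HasDerivAt (fun z : ℂ => z • h z) ((0 : ℂ) • deriv h 0 + (1 : ℂ) • h 0) 0 :=
      (hasDerivAt_id' 0).smul hh.hasDerivAt
    simpa using this.deriv
  · simpa using dslope_sub_smul_of_ne h hz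

theorem Complex.norm_le_div_of_mapsTo_ball_smul {E : Type*} [NormedAddCommGroup E]
    [NormedSpace ℂ E] {h : ℂ → E} {R₁ R₂ : ℝ} (hd : DifferentiableOn ℂ h (ball 0 R₁))
    (h_maps : MapsTo (fun z => z • h z) (ball 0 R₁) (closedBall 0 R₂)) {z : ℂ}
    (hz : z ∈ ball 0 R₁) : ‖h z‖ ≤ R₂ / R₁ := by
  have hR₁ : 0 < R₁ := nonempty_ball.1 ⟨z, hz⟩
  have hd₀ : DifferentiableAt ℂ h 0 := hd.differentiableAt (ball_mem_nhds 0 hR₁)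
  rw [← dslope_smul_self_zero hd₀]
  refine norm_dslope_le_div_of_mapsTo_ball ?_ (by simpa using h_maps) hz
  exact differentiableOn_id.smul hd

theorem Complex.norm_lt_norm_two_mul_sub_of_re_lt {c : ℝ} (hc : 0 < c) {w : ℂ} (hw : w.re < c) :
    ‖w‖ < ‖2 * (c : ℂ) - w‖ := by
  rw [norm_def, norm_def]
  apply Real.sqrt_lt_sqrt (normSq_nonneg w)
  simp only [normSq_apply, sub_re, sub_im, mul_re, mul_im, ofReal_re, ofReal_im, re_ofNat,
    im_ofNat]
  nlinarith

theorem norm_mul_one_sub_norm_le_of_re_mul_lt {p : ℂ → ℂ} {c : ℝ} (hc : 0 < c)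
    (hp : DifferentiableOn ℂ p (ball 0 1)) (hre : ∀ z ∈ ball (0 : ℂ) 1, (z * p z).re < c)
    {z : ℂ} (hz : z ∈ ball (0 : ℂ) 1) : ‖p z‖ * (1 - ‖z‖) ≤ 2 * c := by
  have hlt : ∀ z ∈ ball (0 : ℂ) 1, ‖z * p z‖ < ‖2 * (c : ℂ) - z * p z‖ := fun z hz =>
    norm_lt_norm_two_mul_sub_of_re_lt hc (hre z hz)
  have hne : ∀ z ∈ ball (0 : ℂ) 1, 2 * (c : ℂ) - z * p z ≠ 0 := fun z hz =>
    norm_pos_iff.1 ((norm_nonneg _).trans_lt (hlt z hz))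
  set h : ℂ → ℂ := fun z => p z / (2 * c - z * p z)
  have hd : DifferentiableOn ℂ h (ball 0 1) :=
    hp.div ((differentiableOn_const _).sub (differentiableOn_id.mul hp)) hne
  have h_maps : MapsTo (fun z => z • h z) (ball 0 1) (closedBall 0 1) := by
    intro z hz
    simp only [mem_closedBall_zero_iff, smul_eq_mul, h, ← mul_div_assoc, norm_div]
    exact div_le_one_of_le₀ (hlt z hz).le (norm_nonneg _)
  have hh : ‖p z‖ ≤ ‖2 * (c : ℂ) - z * p z‖ := by
    have := norm_le_div_of_mapsTo_ball_smul hd h_maps hz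
    rwa [div_one, norm_div, div_le_one ((norm_nonneg _).trans_lt (hlt z hz))] at this
  have h2c : ‖2 * (c : ℂ)‖ = 2 * c := by simp [abs_of_pos hc]
  have htri := hh.trans (norm_sub_le _ _)
  rw [h2c, norm_mul] at htri
  linarith

theorem stmt10_general (β : ℝ) (hβ₁ : 2 / 3 < β)
    (f : ℂ → ℂ) (hf : InF f β) :
    ∀ z ∈ unitDisk,
      (1 - ‖z‖ ^ 2) * ‖deriv (deriv f) z / deriv f z‖
        ≤ 2 * (3 * β - 2) := by
  obtain ⟨⟨hA, -, -⟩, hB⟩ := hf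
  set p : ℂ → ℂ := fun z => deriv (deriv f) z / deriv f z
  have hp : DifferentiableOn ℂ p unitDisk :=
    (hA.deriv.deriv.div hA.deriv fun z hz => (hB z hz).1).differentiableOn
  have hre : ∀ z ∈ unitDisk, (z * p z).re < (3 * β - 2) / 2 := fun z hz => by
    have := (hB z hz).2
    simp only [add_re, one_re, mul_div_assoc] at this
    linarith
  intro z hz
  have hz₁ : ‖z‖ < 1 := mem_ball_zero_iff.1 hz
  have key := norm_mul_one_sub_norm_le_of_re_mul_lt (by linarith) hp hre hz
  calc (1 - ‖z‖ ^ 2) * ‖p z‖ = (1 + ‖z‖) * (‖p z‖ * (1 - ‖z‖)) := by ring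
    _ ≤ 2 * (2 * ((3 * β - 2) / 2)) := by gcongr; linarith
    _ = 2 * (3 * β - 2) := by ring

/-- pre-Schwarzian norm estimate for `ℱ_β`. -/
theorem stmt10 (β : ℝ) (hβ₁ : 2 / 3 < β) (hβ₂ : β ≤ 1)
    (f : ℂ → ℂ) (hf : InF f β) :
    ∀ z ∈ unitDisk,
      (1 - ‖z‖ ^ 2) * ‖deriv (deriv f) z / deriv f z‖
        ≤ 2 * (3 * β - 2) :=
  stmt10_general β hβ₁ f hf
end
end

section
/- Let −1 ≤ B < A ≤ 1 and f ∈ 𝒦(A,B). Then ‖f‖ ≤ N(A,B), where N(A,B) = 2(A−B)(1 − √(1−B²))/B² if B ≠ 0, and N(A,0) = A. -/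
open Complex Metric Set

noncomputable section

/-- Subordination `φ ≺ ψ` on the unit disk. -/
def Subordinate (φ ψ : ℂ → ℂ) : Prop :=
  ∃ ω : ℂ → ℂ, AnalyticOnNhd ℂ ω unitDisk ∧ ω 0 = 0 ∧
    (∀ z ∈ unitDisk, ω z ∈ unitDisk) ∧ ∀ z ∈ unitDisk, φ z = ψ (ω z)

/-- `f ∈ 𝒦(A,B)`: `1 + z f''/f' ≺ (1+Az)/(1+Bz)`. -/
def InK (f : ℂ → ℂ) (A B : ℝ) : Prop :=
  InA f ∧ (∀ z ∈ unitDisk, deriv f z ≠ 0) ∧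
  Subordinate (fun z => 1 + z * deriv (deriv f) z / deriv f z)
    (fun z => (1 + (A : ℂ) * z) / (1 + (B : ℂ) * z))

/-
Write `ω` for the Schwarz function of the subordination, `ω z = z φ(z)` with `‖φ‖ ≤ 1` by the Schwarz
lemma. Solving `1 + z f''/f' = (1 + Aω)/(1 + Bω)` gives `f''/f' = (A - B) φ / (1 + Bω)`, so
`(1 - r²) ‖f''/f'‖ ≤ (A - B)(1 - r²)/(1 - |B| r)` on `‖z‖ = r ≠ 0`. The maximum of
`(1 - r²)/(1 - b r)` over `r ∈ [0, 1)` is `2(1 - √(1 - b²))/b²`, attained at `r = b/(1 + √(1 - b²))`.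
The centre `z = 0` follows by continuity.
-/

def preSchwarzianNormBound (A B : ℝ) : ℝ :=
  if B = 0 then A else 2 * (A - B) * (1 - Real.sqrt (1 - B ^ 2)) / B ^ 2

lemma sq_mul_one_sub_sq_le {b : ℝ} (hb : b ^ 2 ≤ 1) (r : ℝ) :
    b ^ 2 * (1 - r ^ 2) ≤ 2 * (1 - Real.sqrt (1 - b ^ 2)) * (1 - b * r) := by
  set s := Real.sqrt (1 - b ^ 2)
  have hs0 : 0 ≤ s := Real.sqrt_nonneg _
  have hs2 : s ^ 2 = 1 - b ^ 2 := Real.sq_sqrt (by linarith)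
  -- the gap, scaled by `(1 + s)²`, is a perfect square vanishing at `r = b / (1 + s)`
  have hgap : (1 + s) ^ 2 * (2 * (1 - s) * (1 - b * r) - b ^ 2 * (1 - r ^ 2))
      = (b * ((1 + s) * r - b)) ^ 2 := by
    linear_combination (-(2 * (1 - b * r) * (1 + s) + b ^ 2)) * hs2
  nlinarith [sq_nonneg (b * ((1 + s) * r - b))]

lemma one_sub_sq_mul_div_le_preSchwarzianNormBound {A B r : ℝ} (hBA : B ≤ A) (hB : |B| ≤ 1)
    (hr0 : 0 ≤ r) (hr1 : r < 1) :
    (1 - r ^ 2) * ((A - B) / (1 - |B| * r)) ≤ preSchwarzianNormBound A B := by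
  unfold preSchwarzianNormBound
  split_ifs with hB0
  · subst hB0
    simp only [abs_zero, zero_mul, sub_zero, div_one]
    nlinarith [sq_nonneg r]
  · have hden : 0 < 1 - |B| * r := by nlinarith [abs_nonneg B]
    have hineq := sq_mul_one_sub_sq_le (b := |B|) (pow_le_one₀ (abs_nonneg B) hB) r
    rw [sq_abs] at hineq
    rw [mul_div_assoc', div_le_div_iff₀ hden (by positivity)]
    nlinarith [mul_le_mul_of_nonneg_left hineq (sub_nonneg.2 hBA)]

lemma InK.norm_deriv_deriv_div_deriv_le {f : ℂ → ℂ} {A B : ℝ} (hf : InK f A B) (hBA : B ≤ A)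
    (hB : |B| ≤ 1) {z : ℂ} (hz : z ∈ unitDisk) (hz0 : z ≠ 0) :
    ‖deriv (deriv f) z / deriv f z‖ ≤ (A - B) / (1 - |B| * ‖z‖) := by
  obtain ⟨-, hf', ω, hω, hω0, hωmaps, hωeq⟩ := hf
  set g := deriv (deriv f) z / deriv f z
  set φ := dslope ω 0 z
  have hωz : ω z = z * φ := by simpa [hω0] using (sub_smul_dslope ω 0 z).symm
  have hφ : ‖φ‖ ≤ 1 := by
    simpa [hω0] using Complex.norm_dslope_le_div_of_mapsTo_ball hω.differentiableOn
      (fun x hx => by simpa [hω0] using ball_subset_closedBall (hωmaps x hx)) hz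
  have hz1 : ‖z‖ < 1 := mem_ball_zero_iff.1 hz
  have hden_pos : 0 < 1 - |B| * ‖z‖ := by nlinarith [abs_nonneg B, norm_nonneg z]
  have hden : 1 - |B| * ‖z‖ ≤ ‖1 + (B : ℂ) * ω z‖ := by
    have hωle : ‖ω z‖ ≤ ‖z‖ := by
      rw [hωz, norm_mul]; exact mul_le_of_le_one_right (norm_nonneg z) hφ
    have := norm_sub_norm_le (1 : ℂ) (-((B : ℂ) * ω z))
    rw [sub_neg_eq_add, norm_neg, norm_mul, norm_real, Real.norm_eq_abs, norm_one] at this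
    nlinarith [abs_nonneg B]
  have hne : 1 + (B : ℂ) * ω z ≠ 0 := norm_pos_iff.1 (hden_pos.trans_le hden)
  have hsolve : g * (1 + B * ω z) = ((A - B : ℝ) : ℂ) * φ := by
    have h := hωeq z hz
    dsimp only at h
    rw [mul_div_assoc, eq_div_iff hne] at h
    apply mul_left_cancel₀ hz0
    rw [hωz] at h ⊢
    push_cast
    linear_combination h
  rw [le_div_iff₀ hden_pos]
  calc ‖g‖ * (1 - |B| * ‖z‖) ≤ ‖g‖ * ‖1 + (B : ℂ) * ω z‖ := by gcongr
    _ = (A - B) * ‖φ‖ := by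
      rw [← norm_mul, hsolve, norm_mul, norm_real, Real.norm_of_nonneg (sub_nonneg.2 hBA)]
    _ ≤ A - B := mul_le_of_le_one_right (sub_nonneg.2 hBA) hφ

lemma InK.one_sub_norm_sq_mul_norm_le {f : ℂ → ℂ} {A B : ℝ} (hf : InK f A B) (hBA : B ≤ A)
    (hB : |B| ≤ 1) {z : ℂ} (hz : z ∈ unitDisk) (hz0 : z ≠ 0) :
    (1 - ‖z‖ ^ 2) * ‖deriv (deriv f) z / deriv f z‖ ≤ preSchwarzianNormBound A B := by
  have hz1 : ‖z‖ < 1 := mem_ball_zero_iff.1 hz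
  calc (1 - ‖z‖ ^ 2) * ‖deriv (deriv f) z / deriv f z‖
      ≤ (1 - ‖z‖ ^ 2) * ((A - B) / (1 - |B| * ‖z‖)) := by
        gcongr
        · nlinarith [norm_nonneg z]
        · exact hf.norm_deriv_deriv_div_deriv_le hBA hB hz hz0
    _ ≤ preSchwarzianNormBound A B :=
        one_sub_sq_mul_div_le_preSchwarzianNormBound hBA hB (norm_nonneg z) hz1

/-- sharp pre-Schwarzian norm estimate for `𝒦(A,B)`. -/
theorem stmt14 (A B : ℝ) (hB : -1 ≤ B) (hBA : B < A) (hA : A ≤ 1)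
    (f : ℂ → ℂ) (hf : InK f A B) :
    ∀ z ∈ unitDisk,
      (1 - ‖z‖ ^ 2) * ‖deriv (deriv f) z / deriv f z‖
        ≤ if B = 0 then A
          else 2 * (A - B) * (1 - Real.sqrt (1 - B ^ 2)) / B ^ 2 := by
  have hB1 : |B| ≤ 1 := abs_le.2 ⟨hB, by linarith⟩
  intro z hz
  rcases eq_or_ne z 0 with rfl | hz0
  · have hfa : AnalyticOnNhd ℂ f unitDisk := hf.1.1
    have hcont : ContinuousAt (fun z => (1 - ‖z‖ ^ 2) * ‖deriv (deriv f) z / deriv f z‖) 0 :=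
      (continuousAt_const.sub (continuous_norm.continuousAt.pow 2)).mul
        ((hfa.deriv.deriv 0 hz).continuousAt.div (hfa.deriv 0 hz).continuousAt (hf.2.1 0 hz)).norm
    refine le_of_tendsto (hcont.tendsto.mono_left (nhdsWithin_le_nhds (s := {0}ᶜ))) ?_
    filter_upwards [nhdsWithin_le_nhds (isOpen_ball.mem_nhds hz), self_mem_nhdsWithin]
      with x hx hx0 using hf.one_sub_norm_sq_mul_norm_le hBA.le hB1 hx hx0
  · exact hf.one_sub_norm_sq_mul_norm_le hBA.le hB1 hz hz0
end
end
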